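/- arXiv:2303.15650 — 2 statements merged into one kernel-verified Lean document; each statement's English description precedes it below -/
import Mathlib

section
/- For every even natural number k there exists an even natural number N such that for all even natural numbers n ≥ N with n ≥ k, 2·C(n, (n−k)/2) ≥ C(n, n/2). -/
open scoped Nat

/-- `(2m+1)^m ≤ 2·(2m)^m`, i.e. `(1+1/(2m))^m ≤ 2`. -/
lemma aux_pow_two (m : ℕ) (hm : 1 ≤ m) : (2 * m + 1) ^ m ≤ 2 * (2 * m) ^ m := by
  have key : ((2 * m + 1 : ℕ) : ℚ) ^ m ≤ 2 * ((2 * m : ℕ) : ℚ) ^ m := by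
    push_cast
    set q : ℚ := 2 * (m : ℚ) + 1 with hq
    have hm1 : (1 : ℚ) ≤ (m : ℚ) := by exact_mod_cast hm
    have hqpos : (0 : ℚ) < q := by rw [hq]; linarith
    have hq1 : (1 : ℚ) / q ≤ 1 := by
      rw [div_le_one hqpos]; rw [hq]; linarith
    have hq0 : (0 : ℚ) < 1 / q := by positivity
    have hb := one_add_mul_le_pow (a := -(1 / q)) (by linarith) m
    have h1 : (1 : ℚ) + (m : ℚ) * (-(1 / q)) = 1 - (m : ℚ) / q := by ring
    have h2 : (1 : ℚ) + -(1 / q) = (2 * (m : ℚ)) / q := by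
      field_simp; rw [hq]; ring
    rw [h1, h2] at hb
    have hhalf : (1 / 2 : ℚ) ≤ 1 - (m : ℚ) / q := by
      have : (m : ℚ) / q ≤ 1 / 2 := by
        rw [div_le_div_iff₀ hqpos (by norm_num : (0:ℚ) < 2), hq]
        linarith
      linarith
    have hb2 : (1 / 2 : ℚ) ≤ (2 * (m : ℚ)) ^ m / q ^ m := by
      rw [← div_pow]; linarith
    have hqm : (0 : ℚ) < q ^ m := by positivity
    rw [div_le_div_iff₀ (by norm_num) hqm] at hb2
    linarith
  exact_mod_cast key

/-- `(t+m)^m ≤ 2·(t-m)^m` for `t ≥ 4m² + m`. -/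
lemma aux_pow (m t : ℕ) (ht : 4 * m ^ 2 + m ≤ t) :
    (t + m) ^ m ≤ 2 * (t - m) ^ m := by
  rcases Nat.eq_zero_or_pos m with hm | hm
  · subst hm; simp
  have hmt : m ≤ t := by nlinarith
  obtain ⟨u, hu⟩ : ∃ u, t = u + m := ⟨t - m, by omega⟩
  subst hu
  have hsub : u + m - m = u := by omega
  rw [hsub]
  have hu4 : 4 * m ^ 2 ≤ u := by nlinarith
  have h1 : 2 * m * (u + m + m) ≤ (2 * m + 1) * u := by nlinarith
  have h2 : (2 * m) ^ m * (u + m + m) ^ m ≤ (2 * m + 1) ^ m * u ^ m := by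
    calc (2 * m) ^ m * (u + m + m) ^ m = (2 * m * (u + m + m)) ^ m :=
          (mul_pow (2 * m) (u + m + m) m).symm
      _ ≤ ((2 * m + 1) * u) ^ m := Nat.pow_le_pow_left h1 m
      _ = (2 * m + 1) ^ m * u ^ m := mul_pow (2 * m + 1) u m
  have h3 : (2 * m + 1) ^ m * u ^ m ≤ 2 * (2 * m) ^ m * u ^ m :=
    Nat.mul_le_mul_right _ (aux_pow_two m hm)
  have h4 : (2 * m) ^ m * (u + m + m) ^ m ≤ (2 * m) ^ m * (2 * u ^ m) := by
    calc (2 * m) ^ m * (u + m + m) ^ m ≤ 2 * (2 * m) ^ m * u ^ m :=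
          le_trans h2 h3
      _ = (2 * m) ^ m * (2 * u ^ m) := by ring
  have hpos : 0 < (2 * m) ^ m := pow_pos (by omega) m
  exact Nat.le_of_mul_le_mul_left h4 hpos

/-- factorial version. -/
lemma aux_fact (m t : ℕ) (ht : 4 * m ^ 2 + m ≤ t) :
    (t + m)! * (t - m)! ≤ 2 * (t ! * t !) := by
  have hmt : m ≤ t := by nlinarith
  have h1 : (t + m)! = t ! * (t + 1).ascFactorial m :=
    (Nat.factorial_mul_ascFactorial t m).symm
  have h2 : t ! = (t - m)! * t.descFactorial m :=
    (Nat.factorial_mul_descFactorial hmt).symm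
  have hasc : (t + 1).ascFactorial m ≤ (t + m) ^ m := Nat.ascFactorial_le_pow_add t m
  have hdesc : (t - m) ^ m ≤ t.descFactorial m := by
    calc (t - m) ^ m ≤ (t + 1 - m) ^ m := Nat.pow_le_pow_left (by omega) m
      _ ≤ t.descFactorial m := Nat.pow_sub_le_descFactorial t m
  have key : (t + 1).ascFactorial m ≤ 2 * t.descFactorial m := by
    calc (t + 1).ascFactorial m ≤ (t + m) ^ m := hasc
      _ ≤ 2 * (t - m) ^ m := aux_pow m t ht
      _ ≤ 2 * t.descFactorial m := Nat.mul_le_mul_left 2 hdesc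
  calc (t + m)! * (t - m)! = t ! * (t - m)! * (t + 1).ascFactorial m := by
        rw [h1]; ring
    _ ≤ t ! * (t - m)! * (2 * t.descFactorial m) :=
        Nat.mul_le_mul_left _ key
    _ = 2 * (t ! * ((t - m)! * t.descFactorial m)) := by ring
    _ = 2 * (t ! * t !) := by rw [← h2]

/-- choose version. -/
lemma aux_choose (m t : ℕ) (ht : 4 * m ^ 2 + m ≤ t) :
    Nat.choose (2 * t) t ≤ 2 * Nat.choose (2 * t) (t - m) := by
  have hmt : m ≤ t := by nlinarith
  have h1 : Nat.choose (2 * t) t * t ! * t ! = (2 * t)! := by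
    have := Nat.choose_mul_factorial_mul_factorial (show t ≤ 2 * t by omega)
    simpa [show 2 * t - t = t by omega] using this
  have h2 : Nat.choose (2 * t) (t - m) * (t - m)! * (t + m)! = (2 * t)! := by
    have := Nat.choose_mul_factorial_mul_factorial (show t - m ≤ 2 * t by omega)
    simpa [show 2 * t - (t - m) = t + m by omega] using this
  have hfac : 0 < t ! * t ! := Nat.mul_pos (Nat.factorial_pos t) (Nat.factorial_pos t)
  have heq : Nat.choose (2 * t) t * (t ! * t !) =
      Nat.choose (2 * t) (t - m) * ((t + m)! * (t - m)!) := by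
    calc Nat.choose (2 * t) t * (t ! * t !)
        = Nat.choose (2 * t) t * t ! * t ! := by ring
      _ = (2 * t)! := h1
      _ = Nat.choose (2 * t) (t - m) * (t - m)! * (t + m)! := h2.symm
      _ = Nat.choose (2 * t) (t - m) * ((t + m)! * (t - m)!) := by ring
  have key : Nat.choose (2 * t) t * (t ! * t !) ≤
      2 * Nat.choose (2 * t) (t - m) * (t ! * t !) := by
    rw [heq]
    calc Nat.choose (2 * t) (t - m) * ((t + m)! * (t - m)!)
        ≤ Nat.choose (2 * t) (t - m) * (2 * (t ! * t !)) :=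
          Nat.mul_le_mul_left _ (aux_fact m t ht)
      _ = 2 * Nat.choose (2 * t) (t - m) * (t ! * t !) := by ring
  exact Nat.le_of_mul_le_mul_right key hfac

theorem eventually_more_torus_than_unlink :
    ∀ k : ℕ, Even k → ∃ N : ℕ, Even N ∧ ∀ n : ℕ, Even n → N ≤ n → k ≤ n →
      Nat.choose n (n / 2) ≤ 2 * Nat.choose n ((n - k) / 2) := by
  intro k hk
  obtain ⟨m, hm⟩ := hk
  refine ⟨2 * (4 * m ^ 2 + m), ⟨4 * m ^ 2 + m, by ring⟩, ?_⟩
  intro n hn hN hkn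
  obtain ⟨t, htn⟩ := hn
  have hnt : n = 2 * t := by omega
  have hkm : k = 2 * m := by omega
  have ht : 4 * m ^ 2 + m ≤ t := by omega
  have hmt : m ≤ t := by omega
  have e1 : n / 2 = t := by omega
  have e2 : (n - k) / 2 = t - m := by omega
  rw [e1, e2, hnt]
  exact aux_choose m t ht
end

section
/- For positive even integers a₁, a₂ and even k, ℓ with 2 ≤ k ≤ a₁ and 2 ≤ ℓ ≤ a₂, the total count 2^{a₂}·C(a₁, a₁/2) + (2^{a₁} − C(a₁, a₁/2))·C(a₂, a₂/2) + Σ_{k,ℓ} [C(a₁,(a₁−k)/2)·C(a₂,(a₂−ℓ)/2) + C(a₁,(a₁−ℓ)/2)·C(a₂,(a₂−k)/2)] over appropriate ranges, where each nonzero resolution pair is counted with sign multiplicity 2, equals 2^{a₁+a₂}; i.e., the unknot count plus all nontrivial resultant counts of the N[a₁' a₂'] shadow sum to the total number of crossing assignments. -/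
/-- The even numbers `2, 4, ..., a` (for `a` even). -/
def evensUpTo (a : ℕ) : Finset ℕ := (Finset.Icc 1 (a / 2)).image (fun j => 2 * j)

lemma half_sum (n : ℕ) :
    (2*n).choose n + 2 * ∑ i ∈ Finset.range n, (2*n).choose i = 2^(2*n) := by
  have h := Nat.sum_range_choose (2*n)
  have hsplit : ∑ i ∈ Finset.range (2*n+1), (2*n).choose i
      = ∑ i ∈ Finset.range (n+1), (2*n).choose i
        + ∑ i ∈ Finset.Ico (n+1) (2*n+1), (2*n).choose i := by
    rw [Finset.range_eq_Ico, Finset.range_eq_Ico]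
    exact (Finset.sum_Ico_consecutive (fun i => (2*n).choose i) (Nat.zero_le _) (by omega : n+1 ≤ 2*n+1)).symm
  have htail : ∑ i ∈ Finset.Ico (n+1) (2*n+1), (2*n).choose i
      = ∑ i ∈ Finset.range n, (2*n).choose i := by
    rw [Finset.sum_Ico_eq_sum_range]
    have : ∀ i ∈ Finset.range (2*n+1-(n+1)), (2*n).choose (n+1+i) = (2*n).choose (n-1-i) := by
      intro i hi
      simp only [Finset.mem_range] at hi
      rw [← Nat.choose_symm (by omega)]
      congr 1
      omega
    rw [Finset.sum_congr rfl this, show 2*n+1-(n+1) = n by omega,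
      Finset.sum_range_reflect]
  rw [hsplit, htail, Finset.sum_range_succ] at h
  omega

lemma evens_sum (n : ℕ) (f : ℕ → ℕ) :
    ∑ k ∈ evensUpTo (2*n), f ((2*n - k)/2) = ∑ i ∈ Finset.range n, f i := by
  unfold evensUpTo
  rw [Finset.sum_image (by intro a _ b _ h; have h' : 2 * a = 2 * b := h; omega)]
  rw [show (2*n)/2 = n by omega]
  have : ∀ j ∈ Finset.Icc 1 n, f ((2*n - 2*j)/2) = f (n - j) := by
    intro j hj
    simp only [Finset.mem_Icc] at hj
    congr 1; omega
  rw [Finset.sum_congr rfl this]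
  rw [show Finset.Icc 1 n = Finset.Ico 1 (n+1) by rfl, Finset.sum_Ico_eq_sum_range]
  have : ∀ i ∈ Finset.range (n+1-1), f (n - (1+i)) = f (n-1-i) := by
    intro i hi; congr 1; omega
  rw [Finset.sum_congr rfl this, show n+1-1 = n by omega, Finset.sum_range_reflect]

lemma double_sum (s t : Finset ℕ) (f g : ℕ → ℕ) :
    ∑ k ∈ s, ∑ l ∈ t, 2 * (f k * g l) = 2 * ((∑ k ∈ s, f k) * (∑ l ∈ t, g l)) := by
  rw [Finset.sum_mul_sum, Finset.mul_sum]
  refine Finset.sum_congr rfl fun k _ => ?_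
  rw [Finset.mul_sum]

lemma double_sum' (s t : Finset ℕ) (f g : ℕ → ℕ) :
    ∑ k ∈ s, ∑ l ∈ t, 2 * (f l * g k) = 2 * ((∑ l ∈ t, f l) * (∑ k ∈ s, g k)) := by
  rw [Finset.sum_comm]
  exact double_sum t s f g

theorem two_bridge_resultant_total (a₁ a₂ : ℕ)
    (h₁ : Even a₁) (h₂ : Even a₂) (hp₁ : 0 < a₁) (hp₂ : 0 < a₂) :
    2 ^ a₂ * Nat.choose a₁ (a₁ / 2)
      + (2 ^ a₁ - Nat.choose a₁ (a₁ / 2)) * Nat.choose a₂ (a₂ / 2)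
      + ∑ k ∈ evensUpTo a₁, ∑ l ∈ evensUpTo a₂,
          2 * (Nat.choose a₁ ((a₁ - k) / 2) * Nat.choose a₂ ((a₂ - l) / 2))
      + ∑ k ∈ evensUpTo a₂, ∑ l ∈ evensUpTo a₁,
          2 * (Nat.choose a₁ ((a₁ - l) / 2) * Nat.choose a₂ ((a₂ - k) / 2))
      = 2 ^ (a₁ + a₂) := by
  obtain ⟨n₁, hn₁⟩ := h₁
  obtain ⟨n₂, hn₂⟩ := h₂
  have e₁ : a₁ = 2 * n₁ := by omega
  have e₂ : a₂ = 2 * n₂ := by omega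
  subst e₁; subst e₂
  set S₁ := ∑ i ∈ Finset.range n₁, (2*n₁).choose i with hS₁
  set S₂ := ∑ i ∈ Finset.range n₂, (2*n₂).choose i with hS₂
  set C₁ := (2*n₁).choose n₁ with hC₁
  set C₂ := (2*n₂).choose n₂ with hC₂
  have key₁ : C₁ + 2 * S₁ = 2^(2*n₁) := half_sum n₁
  have key₂ : C₂ + 2 * S₂ = 2^(2*n₂) := half_sum n₂
  have sumA : ∑ k ∈ evensUpTo (2*n₁), ∑ l ∈ evensUpTo (2*n₂),
      2 * ((2*n₁).choose ((2*n₁ - k) / 2) * (2*n₂).choose ((2*n₂ - l) / 2))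
      = 2 * (S₁ * S₂) := by
    rw [double_sum, evens_sum n₁ (fun i => (2*n₁).choose i),
      evens_sum n₂ (fun i => (2*n₂).choose i)]
  have sumB : ∑ k ∈ evensUpTo (2*n₂), ∑ l ∈ evensUpTo (2*n₁),
      2 * ((2*n₁).choose ((2*n₁ - l) / 2) * (2*n₂).choose ((2*n₂ - k) / 2))
      = 2 * (S₁ * S₂) := by
    rw [double_sum', evens_sum n₁ (fun i => (2*n₁).choose i),
      evens_sum n₂ (fun i => (2*n₂).choose i)]
  rw [show (2*n₁)/2 = n₁ by omega, show (2*n₂)/2 = n₂ by omega, sumA, sumB,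
    ← hC₁, ← hC₂, show 2^(2*n₁) - C₁ = 2*S₁ by omega, pow_add, ← key₁, ← key₂]
  ring
end
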